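/- Let j ≥ 1 be an integer, let λ ≥ 1 and μ ≥ 1 be real numbers, and let s ≤ 0. For a : Ż_λ → ℂ define b : Ż_{λμ} → ℂ by b(κ) = μ^{−2j}·a(μκ) (note that μκ ∈ Ż_λ whenever κ ∈ Ż_{λμ}). Then ‖b‖_{H^s_{λμ}} ≤ μ^{−2j+1/2−s}·‖a‖_{H^s_λ}. -/

import Mathlib

/-!
Dilating the frequency lattice by `μ` turns the normalisation `1/(λμ)` into `μ⁻¹ · 1/λ`, and since
`⟨k⟩ ≤ μ ⟨k/μ⟩` for `μ ≥ 1`, a non-positive power of the weight grows by at most `μ^{-2s}`.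
Hence dilation costs at most `μ^{-1/2-s}` in `H^s`, the factor `μ^{-2j}` comes out of the norm,
and `μ^{-2j-1/2-s} ≤ μ^{-2j+1/2-s}`.
-/

open scoped ENNReal

noncomputable section

/-- Japanese bracket `⟨x⟩ = (1+x²)^{1/2}`. -/
def jap (x : ℝ) : ℝ := Real.sqrt (1 + x ^ 2)

/-- `H^s_λ` norm of a Fourier-coefficient function `a` on `Ż_λ = {m/λ : m ∈ ℤ, m ≠ 0}`:
`‖a‖_{H^s_λ} = ((1/λ) Σ_{k∈Ż_λ} ⟨k⟩^{2s} |a(k)|²)^{1/2}`. -/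
def HsN (lam s : ℝ) (a : ℝ → ℂ) : ℝ≥0∞ :=
  (ENNReal.ofReal (1 / lam) * ∑' m : ℤ, if m = 0 then 0 else
    ENNReal.ofReal (jap ((m : ℝ) / lam) ^ (2 * s)) *
      (‖a ((m : ℝ) / lam)‖₊ : ℝ≥0∞) ^ 2) ^ (1 / 2 : ℝ)

lemma jap_pos (x : ℝ) : 0 < jap x := Real.sqrt_pos.2 (by positivity)

lemma jap_le_mul_jap_div {mu : ℝ} (hmu : 1 ≤ mu) (x : ℝ) : jap x ≤ mu * jap (x / mu) := by
  have hmu0 : 0 < mu := zero_lt_one.trans_le hmu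
  calc jap x ≤ Real.sqrt (mu ^ 2 * (1 + (x / mu) ^ 2)) := by
        apply Real.sqrt_le_sqrt
        rw [mul_add, div_pow, mul_div_cancel₀ _ (by positivity)]
        nlinarith
    _ = mu * jap (x / mu) := by rw [Real.sqrt_mul (sq_nonneg mu), Real.sqrt_sq hmu0.le, jap]

lemma jap_div_rpow_le {mu t : ℝ} (hmu : 1 ≤ mu) (ht : t ≤ 0) (x : ℝ) :
    jap (x / mu) ^ t ≤ mu ^ (-t) * jap x ^ t := by
  have hmu0 : 0 < mu := zero_lt_one.trans_le hmu
  calc jap (x / mu) ^ t ≤ (jap x / mu) ^ t :=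
        Real.rpow_le_rpow_of_nonpos (div_pos (jap_pos x) hmu0)
          ((div_le_iff₀' hmu0).2 (jap_le_mul_jap_div hmu x)) ht
    _ = mu ^ (-t) * jap x ^ t := by
        rw [Real.div_rpow (jap_pos x).le hmu0.le, Real.rpow_neg hmu0.le, div_eq_inv_mul]

lemma HsN_const_mul (lam s : ℝ) (c : ℂ) (a : ℝ → ℂ) :
    HsN lam s (fun k => c * a k) = ‖c‖ₑ * HsN lam s a := by
  have hterm : ∀ m : ℤ, (if m = 0 then 0 else
      ENNReal.ofReal (jap ((m : ℝ) / lam) ^ (2 * s)) * (‖c * a ((m : ℝ) / lam)‖₊ : ℝ≥0∞) ^ 2) =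
      ‖c‖ₑ ^ 2 * (if m = 0 then 0 else
      ENNReal.ofReal (jap ((m : ℝ) / lam) ^ (2 * s)) * (‖a ((m : ℝ) / lam)‖₊ : ℝ≥0∞) ^ 2) := by
    intro m
    split_ifs
    · simp
    · rw [nnnorm_mul, ENNReal.coe_mul, mul_pow, enorm_eq_nnnorm]
      ring
  have hsqrt : (‖c‖ₑ ^ 2) ^ (1 / 2 : ℝ) = ‖c‖ₑ := by
    rw [← ENNReal.rpow_natCast, ← ENNReal.rpow_mul]
    norm_num
  simp only [HsN, hterm, ENNReal.tsum_mul_left]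
  rw [mul_left_comm, ENNReal.mul_rpow_of_nonneg _ _ (by norm_num), hsqrt]

lemma HsN_dilate_le {mu s : ℝ} (hmu : 1 ≤ mu) (hs : s ≤ 0) (lam : ℝ) (a : ℝ → ℂ) :
    HsN (lam * mu) s (fun κ => a (mu * κ)) ≤ ENNReal.ofReal (mu ^ (-1 / 2 - s)) * HsN lam s a := by
  have hmu0 : 0 < mu := zero_lt_one.trans_le hmu
  set K : ℝ≥0∞ := ENNReal.ofReal (mu ^ (-(2 * s)))
  have hterm : ∀ m : ℤ, (if m = 0 then 0 else
      ENNReal.ofReal (jap ((m : ℝ) / (lam * mu)) ^ (2 * s)) *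
        (‖a (mu * ((m : ℝ) / (lam * mu)))‖₊ : ℝ≥0∞) ^ 2) ≤
      K * (if m = 0 then 0 else
      ENNReal.ofReal (jap ((m : ℝ) / lam) ^ (2 * s)) * (‖a ((m : ℝ) / lam)‖₊ : ℝ≥0∞) ^ 2) := by
    intro m
    split_ifs
    · simp
    · have hdilate : mu * ((m : ℝ) / (lam * mu)) = (m : ℝ) / lam := by field_simp
      rw [hdilate, ← div_div]
      calc ENNReal.ofReal (jap ((m : ℝ) / lam / mu) ^ (2 * s)) * (‖a ((m : ℝ) / lam)‖₊ : ℝ≥0∞) ^ 2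
          ≤ ENNReal.ofReal (mu ^ (-(2 * s)) * jap ((m : ℝ) / lam) ^ (2 * s)) *
              (‖a ((m : ℝ) / lam)‖₊ : ℝ≥0∞) ^ 2 := by
            gcongr
            exact jap_div_rpow_le hmu (by linarith) _
        _ = _ := by rw [ENNReal.ofReal_mul (by positivity), mul_assoc]
  have hweight : ENNReal.ofReal (1 / (lam * mu)) * K =
      ENNReal.ofReal (mu ^ (-1 / 2 - s)) ^ (2 : ℝ) * ENNReal.ofReal (1 / lam) := by
    rw [ENNReal.ofReal_rpow_of_nonneg (by positivity) (by norm_num), ← Real.rpow_mul hmu0.le,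
      ← ENNReal.ofReal_mul' (by positivity), ← ENNReal.ofReal_mul (by positivity),
      show (-1 / 2 - s) * 2 = -1 + -(2 * s) by ring, Real.rpow_add hmu0, Real.rpow_neg_one]
    ring_nf
  calc HsN (lam * mu) s (fun κ => a (mu * κ))
      ≤ (ENNReal.ofReal (1 / (lam * mu)) * (K * ∑' m : ℤ, if m = 0 then 0 else
          ENNReal.ofReal (jap ((m : ℝ) / lam) ^ (2 * s)) *
            (‖a ((m : ℝ) / lam)‖₊ : ℝ≥0∞) ^ 2)) ^ (1 / 2 : ℝ) := by
        rw [HsN]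
        gcongr
        rw [← ENNReal.tsum_mul_left]
        exact ENNReal.tsum_le_tsum hterm
    _ = ENNReal.ofReal (mu ^ (-1 / 2 - s)) * HsN lam s a := by
        rw [← mul_assoc, hweight, mul_assoc, ENNReal.mul_rpow_of_nonneg _ _ (by norm_num),
          ← ENNReal.rpow_mul]
        norm_num [HsN]

theorem stmt_19_general (j : ℕ) (lam mu : ℝ) (hmu : 1 ≤ mu)
    (s : ℝ) (hs : s ≤ 0) (a : ℝ → ℂ) :
    HsN (lam * mu) s (fun κ => ((mu ^ (-(2 * (j : ℝ))) : ℝ) : ℂ) * a (mu * κ)) ≤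
      ENNReal.ofReal (mu ^ (-2 * (j : ℝ) + 1 / 2 - s)) * HsN lam s a := by
  have hmu0 : 0 < mu := zero_lt_one.trans_le hmu
  calc HsN (lam * mu) s (fun κ => ((mu ^ (-(2 * (j : ℝ))) : ℝ) : ℂ) * a (mu * κ))
      = ENNReal.ofReal (mu ^ (-(2 * (j : ℝ)))) * HsN (lam * mu) s (fun κ => a (mu * κ)) := by
        rw [HsN_const_mul, ← ofReal_norm, Complex.norm_real, Real.norm_of_nonneg (by positivity)]
    _ ≤ ENNReal.ofReal (mu ^ (-(2 * (j : ℝ)))) *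
          (ENNReal.ofReal (mu ^ (-1 / 2 - s)) * HsN lam s a) := by
        gcongr
        exact HsN_dilate_le hmu hs lam a
    _ = ENNReal.ofReal (mu ^ (-2 * (j : ℝ) + (-1 / 2 - s))) * HsN lam s a := by
        rw [← mul_assoc, ← ENNReal.ofReal_mul (by positivity), ← Real.rpow_add hmu0, neg_mul]
    _ ≤ ENNReal.ofReal (mu ^ (-2 * (j : ℝ) + 1 / 2 - s)) * HsN lam s a := by
        gcongr
        linarith

/-- **Scaling estimate for Theorem 1.1:** for `j ≥ 1`, `λ, μ ≥ 1` and `s ≤ 0`, the scaled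
coefficient function `b(κ) = μ^{−2j} a(μκ)` on `Ż_{λμ}` satisfies
`‖b‖_{H^s_{λμ}} ≤ μ^{−2j+1/2−s} ‖a‖_{H^s_λ}`. -/
theorem stmt_19 (j : ℕ) (hj : 1 ≤ j) (lam mu : ℝ) (hlam : 1 ≤ lam) (hmu : 1 ≤ mu)
    (s : ℝ) (hs : s ≤ 0) (a : ℝ → ℂ) :
    HsN (lam * mu) s (fun κ => ((mu ^ (-(2 * (j : ℝ))) : ℝ) : ℂ) * a (mu * κ)) ≤
      ENNReal.ofReal (mu ^ (-2 * (j : ℝ) + 1 / 2 - s)) * HsN lam s a :=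
  stmt_19_general j lam mu hmu s hs a

end
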